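/- If B(t) is a matrix-valued solution of the ODE dB/dt = -2 B α_R + B ∇A(q), where α_R(t) is symmetric for all t, and B(0)^T B(0) = α_I(0), and α_I(t) solves dα_I/dt = -2 α_I α_R - 2 α_R α_I + ∇A(q)^T α_I + α_I ∇A(q), then B(t)^T B(t) = α_I(t) for all t ≥ 0. -/

import Mathlib

open Matrix Finset

/-- If `B` solves `B' = -2 B αR + B M`, `αI` solves
`αI' = -2 αI αR - 2 αR αI + Mᵀ αI + αI M`, and `B(0)ᵀ B(0) = αI(0)`,
then `B(t)ᵀ B(t) = αI(t)` for all `t ≥ 0`. -/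
theorem gwt_B_relation (N : ℕ) (hN : 1 ≤ N)
    (αR αI M B : ℝ → Matrix (Fin N) (Fin N) ℝ)
    (hαRcont : Continuous αR) (hαIcont : Continuous αI) (hMcont : Continuous M)
    (hαRsymm : ∀ t, (αR t).IsSymm)
    (hB : ∀ t, ∀ i j, HasDerivAt (fun s => B s i j)
      ((-(2 : ℝ) • (B t * αR t) + B t * M t) i j) t)
    (hαI : ∀ t, ∀ i j, HasDerivAt (fun s => αI s i j)
      ((-(2 : ℝ) • (αI t * αR t) - (2 : ℝ) • (αR t * αI t)
        + (M t)ᵀ * αI t + αI t * M t) i j) t)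
    (hinit : (B 0)ᵀ * B 0 = αI 0) :
    ∀ t ≥ 0, (B t)ᵀ * B t = αI t := by
  set D : ℝ → Matrix (Fin N) (Fin N) ℝ := fun t => (B t)ᵀ * B t - αI t with hDdef
  set E : ℝ → Matrix (Fin N) (Fin N) ℝ := fun t =>
    -(2:ℝ) • (D t * αR t) - (2:ℝ) • (αR t * D t) + (M t)ᵀ * D t + D t * M t with hEdef
  have hDderiv : ∀ t i j, HasDerivAt (fun s => D s i j) (E t i j) t := by
    intro t i j
    have hQ : HasDerivAt (fun s => ∑ k, B s k i * B s k j)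
        (∑ k, ((-(2:ℝ) • (B t * αR t) + B t * M t) k i * B t k j
          + B t k i * (-(2:ℝ) • (B t * αR t) + B t * M t) k j)) t :=
      HasDerivAt.fun_sum fun k _ => (hB t k i).mul (hB t k j)
    have h1 : (∑ k, ((-(2:ℝ) • (B t * αR t) + B t * M t) k i * B t k j
          + B t k i * (-(2:ℝ) • (B t * αR t) + B t * M t) k j))
        = ((-(2:ℝ) • (B t * αR t) + B t * M t)ᵀ * B t
          + (B t)ᵀ * (-(2:ℝ) • (B t * αR t) + B t * M t)) i j := by
      simp [Matrix.mul_apply, Matrix.transpose_apply, Finset.sum_add_distrib,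
        mul_comm]
    have hQB : HasDerivAt (fun s => ((B s)ᵀ * B s) i j)
        (((-(2:ℝ) • (B t * αR t) + B t * M t)ᵀ * B t
          + (B t)ᵀ * (-(2:ℝ) • (B t * αR t) + B t * M t)) i j) t := by
      rw [← h1]
      simpa [Matrix.mul_apply, Matrix.transpose_apply] using hQ
    have key : ((-(2:ℝ) • (B t * αR t) + B t * M t)ᵀ * B t
          + (B t)ᵀ * (-(2:ℝ) • (B t * αR t) + B t * M t))
        - (-(2 : ℝ) • (αI t * αR t) - (2 : ℝ) • (αR t * αI t)
        + (M t)ᵀ * αI t + αI t * M t) = E t := by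
      have hs : (αR t)ᵀ = αR t := hαRsymm t
      simp only [hEdef, hDdef, neg_smul, two_smul, Matrix.transpose_add,
        Matrix.transpose_neg, Matrix.transpose_mul, hs]
      noncomm_ring
    have h2 := hQB.sub (hαI t i j)
    have h3 : ((-(2:ℝ) • (B t * αR t) + B t * M t)ᵀ * B t
          + (B t)ᵀ * (-(2:ℝ) • (B t * αR t) + B t * M t)) i j
        - (-(2 : ℝ) • (αI t * αR t) - (2 : ℝ) • (αR t * αI t)
        + (M t)ᵀ * αI t + αI t * M t) i j = E t i j := by
      rw [← Matrix.sub_apply, key]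
    rw [h3] at h2
    exact h2
  intro T hT
  -- bound the coefficients on [0, T]
  set φ : ℝ → ℝ := fun t => (∑ i, ∑ j, |αR t i j|) + ∑ i, ∑ j, |M t i j| with hφdef
  have hφc : Continuous φ := by
    apply Continuous.add
    · exact continuous_finset_sum _ fun i _ =>
        continuous_finset_sum _ fun j _ => (hαRcont.matrix_elem i j).abs
    · exact continuous_finset_sum _ fun i _ =>
        continuous_finset_sum _ fun j _ => (hMcont.matrix_elem i j).abs
  obtain ⟨C, hC⟩ := (isCompact_Icc (a := (0:ℝ)) (b := T)).exists_bound_of_continuousOn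
    hφc.continuousOn
  have hφnn : ∀ t, 0 ≤ φ t := by
    intro t
    apply add_nonneg <;> exact Finset.sum_nonneg fun i _ =>
      Finset.sum_nonneg fun j _ => abs_nonneg _
  have hαRb : ∀ t ∈ Set.Icc (0:ℝ) T, ∀ i j, |αR t i j| ≤ C := by
    intro t ht i j
    have h1 : |αR t i j| ≤ ∑ i, ∑ j, |αR t i j| := by
      calc |αR t i j| ≤ ∑ j, |αR t i j| :=
            Finset.single_le_sum (f := fun j => |αR t i j|) (fun k _ => abs_nonneg _)
              (mem_univ j)
        _ ≤ ∑ i, ∑ j, |αR t i j| :=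
            Finset.single_le_sum (f := fun i => ∑ j, |αR t i j|)
              (fun k _ => Finset.sum_nonneg fun l _ => abs_nonneg _) (mem_univ i)
    have h2 : φ t ≤ C := by
      have := hC t ht
      rwa [Real.norm_eq_abs, abs_of_nonneg (hφnn t)] at this
    refine h1.trans (le_trans ?_ h2)
    exact le_add_of_nonneg_right (Finset.sum_nonneg fun i _ =>
      Finset.sum_nonneg fun j _ => abs_nonneg _)
  have hMb : ∀ t ∈ Set.Icc (0:ℝ) T, ∀ i j, |M t i j| ≤ C := by
    intro t ht i j
    have h1 : |M t i j| ≤ ∑ i, ∑ j, |M t i j| := by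
      calc |M t i j| ≤ ∑ j, |M t i j| :=
            Finset.single_le_sum (f := fun j => |M t i j|) (fun k _ => abs_nonneg _)
              (mem_univ j)
        _ ≤ ∑ i, ∑ j, |M t i j| :=
            Finset.single_le_sum (f := fun i => ∑ j, |M t i j|)
              (fun k _ => Finset.sum_nonneg fun l _ => abs_nonneg _) (mem_univ i)
    have h2 : φ t ≤ C := by
      have := hC t ht
      rwa [Real.norm_eq_abs, abs_of_nonneg (hφnn t)] at this
    refine h1.trans (le_trans ?_ h2)
    exact le_add_of_nonneg_left (Finset.sum_nonneg fun i _ =>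
      Finset.sum_nonneg fun j _ => abs_nonneg _)
  have hC0 : (0:ℝ) ≤ C := le_trans (norm_nonneg _) (hC 0 ⟨le_refl _, hT⟩)
  -- g and its derivative
  set g : ℝ → ℝ := fun t => ∑ i, ∑ j, (D t i j)^2 with hgdef
  set g' : ℝ → ℝ := fun t => ∑ i, ∑ j, (2:ℝ) * D t i j * E t i j with hg'def
  have hg : ∀ t, HasDerivAt g (g' t) t := by
    intro t
    apply HasDerivAt.fun_sum
    intro i _
    apply HasDerivAt.fun_sum
    intro j _
    simpa [pow_one] using (hDderiv t i j).fun_pow 2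
  have hgnn : ∀ t, 0 ≤ g t := fun t =>
    Finset.sum_nonneg fun i _ => Finset.sum_nonneg fun j _ => sq_nonneg _
  set K : ℝ := 12 * C * (N:ℝ)^2 with hKdef
  have hbound : ∀ t ∈ Set.Ico (0:ℝ) T, ‖g' t‖ ≤ K * ‖g t‖ + 0 := by
    intro t ht
    have htIcc : t ∈ Set.Icc (0:ℝ) T := ⟨ht.1, ht.2.le⟩
    set S : ℝ := ∑ k, ∑ l, |D t k l| with hSdef
    have hSnn : 0 ≤ S := Finset.sum_nonneg fun k _ => Finset.sum_nonneg fun l _ => abs_nonneg _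
    have hrow : ∀ i, (∑ l, |D t i l|) ≤ S :=
      fun i => Finset.single_le_sum (f := fun k => ∑ l, |D t k l|)
        (fun k _ => Finset.sum_nonneg fun l _ => abs_nonneg _) (mem_univ i)
    have hcol : ∀ j, (∑ k, |D t k j|) ≤ S :=
      fun j => Finset.sum_le_sum fun k _ =>
        Finset.single_le_sum (f := fun l => |D t k l|) (fun l _ => abs_nonneg _) (mem_univ j)
    have hE : ∀ i j, |E t i j| ≤ 6 * C * S := by
      intro i j
      have hEentry : E t i j = (-(2:ℝ)) * (∑ k, D t i k * αR t k j)
          + (-(2:ℝ)) * (∑ k, αR t i k * D t k j)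
          + (∑ k, M t k i * D t k j) + (∑ k, D t i k * M t k j) := by
        simp [hEdef, Matrix.add_apply, Matrix.sub_apply, Matrix.smul_apply,
          Matrix.mul_apply, Matrix.transpose_apply, Finset.mul_sum, smul_eq_mul]
        ring
      have b1 : |∑ k, D t i k * αR t k j| ≤ C * S := by
        calc |∑ k, D t i k * αR t k j| ≤ ∑ k, |D t i k * αR t k j| :=
              Finset.abs_sum_le_sum_abs _ _
          _ ≤ ∑ k, |D t i k| * C := by
              refine Finset.sum_le_sum fun k _ => ?_
              rw [abs_mul]
              exact mul_le_mul_of_nonneg_left (hαRb t htIcc k j) (abs_nonneg _)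
          _ = (∑ k, |D t i k|) * C := by rw [← Finset.sum_mul]
          _ ≤ S * C := mul_le_mul_of_nonneg_right (hrow i) hC0
          _ = C * S := mul_comm _ _
      have b2 : |∑ k, αR t i k * D t k j| ≤ C * S := by
        calc |∑ k, αR t i k * D t k j| ≤ ∑ k, |αR t i k * D t k j| :=
              Finset.abs_sum_le_sum_abs _ _
          _ ≤ ∑ k, C * |D t k j| := by
              refine Finset.sum_le_sum fun k _ => ?_
              rw [abs_mul]
              exact mul_le_mul_of_nonneg_right (hαRb t htIcc i k) (abs_nonneg _)
          _ = C * (∑ k, |D t k j|) := by rw [← Finset.mul_sum]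
          _ ≤ C * S := mul_le_mul_of_nonneg_left (hcol j) hC0
      have b3 : |∑ k, M t k i * D t k j| ≤ C * S := by
        calc |∑ k, M t k i * D t k j| ≤ ∑ k, |M t k i * D t k j| :=
              Finset.abs_sum_le_sum_abs _ _
          _ ≤ ∑ k, C * |D t k j| := by
              refine Finset.sum_le_sum fun k _ => ?_
              rw [abs_mul]
              exact mul_le_mul_of_nonneg_right (hMb t htIcc k i) (abs_nonneg _)
          _ = C * (∑ k, |D t k j|) := by rw [← Finset.mul_sum]
          _ ≤ C * S := mul_le_mul_of_nonneg_left (hcol j) hC0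
      have b4 : |∑ k, D t i k * M t k j| ≤ C * S := by
        calc |∑ k, D t i k * M t k j| ≤ ∑ k, |D t i k * M t k j| :=
              Finset.abs_sum_le_sum_abs _ _
          _ ≤ ∑ k, |D t i k| * C := by
              refine Finset.sum_le_sum fun k _ => ?_
              rw [abs_mul]
              exact mul_le_mul_of_nonneg_left (hMb t htIcc k j) (abs_nonneg _)
          _ = (∑ k, |D t i k|) * C := by rw [← Finset.sum_mul]
          _ ≤ S * C := mul_le_mul_of_nonneg_right (hrow i) hC0
          _ = C * S := mul_comm _ _
      rw [hEentry]
      calc |(-(2:ℝ)) * (∑ k, D t i k * αR t k j)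
          + (-(2:ℝ)) * (∑ k, αR t i k * D t k j)
          + (∑ k, M t k i * D t k j) + (∑ k, D t i k * M t k j)|
          ≤ |(-(2:ℝ)) * (∑ k, D t i k * αR t k j)
            + (-(2:ℝ)) * (∑ k, αR t i k * D t k j)
            + (∑ k, M t k i * D t k j)| + |∑ k, D t i k * M t k j| := abs_add_le _ _
        _ ≤ (|(-(2:ℝ)) * (∑ k, D t i k * αR t k j)
            + (-(2:ℝ)) * (∑ k, αR t i k * D t k j)| + |∑ k, M t k i * D t k j|)
            + |∑ k, D t i k * M t k j| := by gcongr; exact abs_add_le _ _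
        _ ≤ ((|(-(2:ℝ)) * (∑ k, D t i k * αR t k j)|
            + |(-(2:ℝ)) * (∑ k, αR t i k * D t k j)|) + |∑ k, M t k i * D t k j|)
            + |∑ k, D t i k * M t k j| := by gcongr; exact abs_add_le _ _
        _ ≤ ((2 * (C * S) + 2 * (C * S)) + C * S) + C * S := by
            rw [abs_mul, abs_mul]
            simp only [abs_neg, abs_two]
            gcongr
        _ = 6 * C * S := by ring
    have hS2 : S^2 ≤ (N:ℝ)^2 * g t := by
      have h1 : S = ∑ p : Fin N × Fin N, |D t p.1 p.2| := by
        rw [hSdef, ← Finset.sum_product']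
        rfl
      have h2 : g t = ∑ p : Fin N × Fin N, (D t p.1 p.2)^2 := by
        show (∑ i, ∑ j, (D t i j)^2) = _
        rw [← Finset.sum_product']
        rfl
      have h3 := sq_sum_le_card_mul_sum_sq (s := (univ : Finset (Fin N × Fin N)))
        (f := fun p => |D t p.1 p.2|)
      simp only [Finset.card_univ, Fintype.card_prod, Fintype.card_fin, sq_abs] at h3
      rw [h1, h2]
      calc (∑ p : Fin N × Fin N, |D t p.1 p.2|)^2
          ≤ (N * N : ℕ) * ∑ p : Fin N × Fin N, (D t p.1 p.2)^2 := h3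
        _ = (N:ℝ)^2 * ∑ p : Fin N × Fin N, (D t p.1 p.2)^2 := by
            push_cast; ring
    have hgS : g t ≥ 0 := hgnn t
    rw [Real.norm_eq_abs, Real.norm_eq_abs, abs_of_nonneg hgS, add_zero]
    calc |g' t| ≤ ∑ i, ∑ j, |(2:ℝ) * D t i j * E t i j| := by
          refine (Finset.abs_sum_le_sum_abs _ _).trans ?_
          exact Finset.sum_le_sum fun i _ => Finset.abs_sum_le_sum_abs _ _
      _ ≤ ∑ i, ∑ j, 2 * |D t i j| * (6 * C * S) := by
          refine Finset.sum_le_sum fun i _ => Finset.sum_le_sum fun j _ => ?_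
          rw [abs_mul, abs_mul, abs_two]
          exact mul_le_mul_of_nonneg_left (hE i j) (by positivity)
      _ = (∑ i, ∑ j, |D t i j|) * (12 * C * S) := by
          rw [Finset.sum_mul]
          exact Finset.sum_congr rfl fun i _ => by
            rw [Finset.sum_mul]
            exact Finset.sum_congr rfl fun j _ => by ring
      _ = 12 * C * S * S := by rw [← hSdef]; ring
      _ ≤ 12 * C * ((N:ℝ)^2 * g t) := by
          have : S * S = S^2 := (sq S).symm
          rw [mul_assoc, this]
          exact mul_le_mul_of_nonneg_left hS2 (by positivity)
      _ = K * g t := by rw [hKdef]; ring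
  have hcont : ContinuousOn g (Set.Icc 0 T) :=
    fun t _ => (hg t).continuousAt.continuousWithinAt
  have hderivW : ∀ t ∈ Set.Ico (0:ℝ) T, HasDerivWithinAt g (g' t) (Set.Ici t) t :=
    fun t _ => (hg t).hasDerivWithinAt
  have hD0 : D 0 = 0 := by rw [hDdef]; simp [hinit]
  have hg0 : ‖g 0‖ ≤ 0 := by
    simp [hgdef, hD0]
  have gron := norm_le_gronwallBound_of_norm_deriv_right_le hcont hderivW hg0 hbound T
    ⟨hT, le_refl T⟩
  rw [gronwallBound_ε0_δ0] at gron
  have hgT : g T = 0 := le_antisymm (by rwa [Real.norm_eq_abs, abs_of_nonneg (hgnn T)] at gron)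
    (hgnn T)
  have hDT : ∀ i j, D T i j = 0 := by
    intro i j
    have h1 : ∀ i ∈ (univ : Finset (Fin N)), (0:ℝ) ≤ ∑ j, (D T i j)^2 :=
      fun i _ => Finset.sum_nonneg fun j _ => sq_nonneg _
    have h2 := (Finset.sum_eq_zero_iff_of_nonneg h1).mp hgT i (mem_univ i)
    have h3 := (Finset.sum_eq_zero_iff_of_nonneg (fun j _ => sq_nonneg (D T i j))).mp h2 j
      (mem_univ j)
    exact pow_eq_zero_iff (n := 2) (by norm_num) |>.mp h3
  have : D T = 0 := by
    ext i j
    exact hDT i j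
  rw [hDdef] at this
  exact sub_eq_zero.mp this
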